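/- arXiv:1501.00046 — 4 statements merged into one kernel-verified Lean document; each statement's English description precedes it below -/
import Mathlib

section
/- For any pair of complex vectors a, b of length L and a random vector φ with independent Rademacher entries (each ±1 with probability 1/2), the expectation E[|⟨a,φ⟩|²·|⟨b,φ⟩|²] ≤ 3‖a‖₂²‖b‖₂² − 2⟨|a|²,|b|²⟩, where |a|² denotes the entrywise squared modulus and the inner product is ⟨a,φ⟩ = Σᵢ āᵢφᵢ. -/
open Complex Finset

/-- Rademacher sign vector from a boolean vector. -/
noncomputable def rademacherSign {L : ℕ} (s : Fin L → Bool) (i : Fin L) : ℝ :=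
  if s i then 1 else -1

/-- Expectation over iid uniform Rademacher vectors, modeled as the average over
all `2^L` sign patterns. -/
noncomputable def rademacherExp (L : ℕ) (f : (Fin L → ℝ) → ℝ) : ℝ :=
  (1 / 2 ^ L : ℝ) * ∑ s : Fin L → Bool, f (rademacherSign s)


/-!
The bound holds for `X = ∑ φᵢ • vᵢ`, `Y = ∑ φᵢ • wᵢ` with `vᵢ, wᵢ` in any real inner product
space (for the theorem, `vᵢ = conj aᵢ` in `ℂ`), by induction on `L`, conditioning on the first
sign. Write `X = φ₀ v₀ + X'`, `Y = φ₀ w₀ + Y'`. Averaging over `φ₀ = ±1` removes the terms odd in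
`φ₀`; among the survivors, the cross term `4 ⟪X', v₀⟫ ⟪Y', w₀⟫` is at most
`2 ‖X'‖² ‖w₀‖² + 2 ‖v₀‖² ‖Y'‖²` by Cauchy–Schwarz and AM–GM, and the expectations of these are
given by the second moment `E ‖X'‖² = ∑ᵢ₌₁ ‖vᵢ‖²`, which is the parallelogram law under the same
induction.
-/

section RademacherExp

variable {L : ℕ}

lemma rademacherSign_cons (b : Bool) (s : Fin L → Bool) :
    rademacherSign (Fin.cons b s : Fin (L + 1) → Bool) =
      Fin.cons (if b then 1 else -1) (rademacherSign s) := by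
  ext i
  cases i using Fin.cases <;> simp [rademacherSign]

lemma rademacherExp_zero (f : (Fin 0 → ℝ) → ℝ) : rademacherExp 0 f = f 0 := by
  simp [rademacherExp, Subsingleton.elim (rademacherSign _) 0]

lemma rademacherExp_succ (f : (Fin (L + 1) → ℝ) → ℝ) :
    rademacherExp (L + 1) f =
      rademacherExp L (fun φ => (f (Fin.cons 1 φ) + f (Fin.cons (-1) φ)) / 2) := by
  simp only [rademacherExp]
  rw [← (Fin.consEquiv fun _ => Bool).sum_comp, Fintype.sum_prod_type, Fintype.sum_bool]
  simp only [Fin.consEquiv, Equiv.coe_fn_mk, rademacherSign_cons, ↓reduceIte, Bool.false_eq_true,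
    ← sum_div, sum_add_distrib, one_div, pow_succ, mul_inv_rev]
  ring

lemma rademacherExp_const (c : ℝ) : rademacherExp L (fun _ => c) = c := by
  simp [rademacherExp]

lemma rademacherExp_add (f g : (Fin L → ℝ) → ℝ) :
    rademacherExp L (fun φ => f φ + g φ) = rademacherExp L f + rademacherExp L g := by
  simp [rademacherExp, Finset.sum_add_distrib, mul_add]

lemma rademacherExp_const_mul (c : ℝ) (f : (Fin L → ℝ) → ℝ) :
    rademacherExp L (fun φ => c * f φ) = c * rademacherExp L f := by
  simp only [rademacherExp, ← Finset.mul_sum]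
  ring

lemma rademacherExp_mono {f g : (Fin L → ℝ) → ℝ} (h : ∀ φ, f φ ≤ g φ) :
    rademacherExp L f ≤ rademacherExp L g := by
  unfold rademacherExp
  gcongr with s
  exact h _

end RademacherExp

section InnerProductSpace

variable {E : Type*} [NormedAddCommGroup E] [InnerProductSpace ℝ E]

lemma norm_add_sq_mul_add_norm_sub_sq_mul_le (x y z w : E) :
    ‖x + y‖ ^ 2 * ‖z + w‖ ^ 2 + ‖x - y‖ ^ 2 * ‖z - w‖ ^ 2 ≤
      2 * (‖x‖ ^ 2 * ‖z‖ ^ 2 + 3 * ‖x‖ ^ 2 * ‖w‖ ^ 2 + 3 * ‖y‖ ^ 2 * ‖z‖ ^ 2 +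
        ‖y‖ ^ 2 * ‖w‖ ^ 2) := by
  have cross : inner ℝ x y * inner ℝ z w ≤ ‖x‖ * ‖w‖ * (‖y‖ * ‖z‖) :=
    calc inner ℝ x y * inner ℝ z w ≤ |inner ℝ x y| * |inner ℝ z w| := by
          rw [← abs_mul]; exact le_abs_self _
      _ ≤ ‖x‖ * ‖y‖ * (‖z‖ * ‖w‖) := by
          gcongr <;> exact abs_real_inner_le_norm _ _
      _ = ‖x‖ * ‖w‖ * (‖y‖ * ‖z‖) := by ring
  rw [norm_add_sq_real, norm_add_sq_real, norm_sub_sq_real, norm_sub_sq_real]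
  nlinarith [two_mul_le_add_sq (‖x‖ * ‖w‖) (‖y‖ * ‖z‖)]

variable {L : ℕ}

theorem rademacherExp_norm_sum_smul_sq (v : Fin L → E) :
    rademacherExp L (fun φ => ‖∑ i, φ i • v i‖ ^ 2) = ∑ i, ‖v i‖ ^ 2 := by
  induction L with
  | zero => simp [rademacherExp_zero]
  | succ L ih =>
    simp only [rademacherExp_succ, Fin.sum_univ_succ, Fin.cons_zero, Fin.cons_succ, one_smul,
      neg_one_smul, neg_add_eq_sub, add_comm (v 0)]
    simp_rw [parallelogram_law_with_norm ℝ, mul_div_cancel_left₀ _ (two_ne_zero : (2 : ℝ) ≠ 0)]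
    rw [rademacherExp_add, rademacherExp_const, ih, add_comm]

theorem rademacherExp_norm_sum_smul_sq_mul_le (v w : Fin L → E) :
    rademacherExp L (fun φ => ‖∑ i, φ i • v i‖ ^ 2 * ‖∑ i, φ i • w i‖ ^ 2) ≤
      3 * (∑ i, ‖v i‖ ^ 2) * (∑ i, ‖w i‖ ^ 2) - 2 * ∑ i, ‖v i‖ ^ 2 * ‖w i‖ ^ 2 := by
  induction L with
  | zero => simp [rademacherExp_zero]
  | succ L ih =>
    simp only [rademacherExp_succ, Fin.sum_univ_succ, Fin.cons_zero, Fin.cons_succ, one_smul,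
      neg_one_smul, neg_add_eq_sub, add_comm (v 0), add_comm (w 0)]
    set X : (Fin L → ℝ) → E := fun φ => ∑ i, φ i • v i.succ
    set Y : (Fin L → ℝ) → E := fun φ => ∑ i, φ i • w i.succ
    calc rademacherExp L (fun φ => (‖X φ + v 0‖ ^ 2 * ‖Y φ + w 0‖ ^ 2 +
            ‖X φ - v 0‖ ^ 2 * ‖Y φ - w 0‖ ^ 2) / 2)
        ≤ rademacherExp L (fun φ => ‖X φ‖ ^ 2 * ‖Y φ‖ ^ 2 + (3 * ‖v 0‖ ^ 2 * ‖Y φ‖ ^ 2 +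
            (3 * ‖w 0‖ ^ 2 * ‖X φ‖ ^ 2 + ‖v 0‖ ^ 2 * ‖w 0‖ ^ 2))) :=
          rademacherExp_mono fun φ => by
            linarith [norm_add_sq_mul_add_norm_sub_sq_mul_le (X φ) (v 0) (Y φ) (w 0)]
      _ ≤ _ := by
          simp only [rademacherExp_add, rademacherExp_const_mul, rademacherExp_const, X, Y,
            rademacherExp_norm_sum_smul_sq]
          linarith [ih (fun i => v i.succ) (fun i => w i.succ)]

end InnerProductSpace

/-- For complex vectors `a, b` and an iid Rademacher vector `φ`,
`E[|⟨a,φ⟩|² |⟨b,φ⟩|²] ≤ 3‖a‖₂²‖b‖₂² − 2⟨|a|²,|b|²⟩`. -/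
theorem rademacher_fourth_moment_pair (L : ℕ) (a b : Fin L → ℂ) :
    rademacherExp L (fun φ =>
        ‖∑ i, (starRingEnd ℂ) (a i) * (φ i : ℂ)‖ ^ 2 *
        ‖∑ i, (starRingEnd ℂ) (b i) * (φ i : ℂ)‖ ^ 2)
      ≤ 3 * (∑ i, ‖a i‖ ^ 2) * (∑ i, ‖b i‖ ^ 2)
        - 2 * ∑ i, ‖a i‖ ^ 2 * ‖b i‖ ^ 2 := by
  simpa only [Complex.real_smul, mul_comm (_ : ℂ), Complex.norm_conj] using
    rademacherExp_norm_sum_smul_sq_mul_le (fun i => starRingEnd ℂ (a i))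
      (fun i => starRingEnd ℂ (b i))
end

section
/- Let G = (X ∪ H, E) be a bipartite graph on vertex sets X = {x₁,…,x_L} and H = {h₁,…,h_L} corresponding to the nonzero entries of vectors x, h ∈ ℂ^L, where {xᵢ, hⱼ} ∈ E iff the product xᵢhⱼ is observed and nonzero. If G has two or more connected components each containing at least two vertices, then the rank-one matrix h xᵀ is not uniquely determined (up to the global scaling ambiguity) by the observed entries: there exists a pair (h', x') with h'x'ᵀ ≠ c·hxᵀ for every scalar c, agreeing with hxᵀ on all observed entries. -/
open Finset

/-- The bipartite "observation" graph on vertices `X ⊕ H`: the vertex `xᵢ = Sum.inl i`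
is adjacent to `hⱼ = Sum.inr j` iff the entry `(j,i)` of `h xᵀ` is observed
(`(j,i) ∈ S`) and the product `xᵢ hⱼ` is nonzero. -/
def obsGraph {L : ℕ} (S : Set (Fin L × Fin L)) (x h : Fin L → ℂ) :
    SimpleGraph (Fin L ⊕ Fin L) :=
  SimpleGraph.fromRel (fun u v =>
    ∃ i j : Fin L, u = Sum.inl i ∧ v = Sum.inr j ∧ (j, i) ∈ S ∧ x i * h j ≠ 0)

/-!
Rescale `x` by a weight `φ C ≠ 0` and `h` by `(φ C)⁻¹` on each connected component `C` of the
observation graph. An observed nonzero product `xᵢ hⱼ` is an edge, so it lies inside one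
component and is unchanged; observed zero products stay zero. Take `φ = 2` on the component of
`u` and `φ = 1` elsewhere. The first component contains an edge `xᵢ₀ hⱼ₀` with nonzero product,
which is unchanged, forcing the scalar to be `1`; the second contains some `hⱼ₁ ≠ 0`, and the
product `xᵢ₀ hⱼ₁` is doubled.
-/

open SimpleGraph

namespace SimpleGraph

variable {V : Type*} {G : SimpleGraph V} {u v : V}

lemma Reachable.exists_adj_of_ne (hr : G.Reachable u v) (hne : v ≠ u) : ∃ w, G.Adj u w := by
  obtain ⟨p⟩ := hr
  exact ⟨_, p.adj_snd (p.not_nil_of_ne hne.symm)⟩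

end SimpleGraph

section ComponentScaling

variable {K ι κ : Type*} [Field K] (G : SimpleGraph (ι ⊕ κ)) (φ : G.ConnectedComponent → K)

def componentScaleLeft (x : ι → K) (i : ι) : K :=
  φ (G.connectedComponentMk (.inl i)) * x i

def componentScaleRight (h : κ → K) (j : κ) : K :=
  (φ (G.connectedComponentMk (.inr j)))⁻¹ * h j

variable {G φ} {x : ι → K} {h : κ → K}

lemma componentScale_mul_of_connectedComponentMk_eq {i : ι} {j : κ}
    (hφ : ∀ c, φ c ≠ 0)
    (hij : G.connectedComponentMk (.inl i) = G.connectedComponentMk (.inr j)) :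
    componentScaleRight G φ h j * componentScaleLeft G φ x i = h j * x i := by
  have := hφ (G.connectedComponentMk (.inr j))
  simp only [componentScaleRight, componentScaleLeft, hij]
  field_simp

lemma componentScale_mul_of_mul_eq_zero {i : ι} {j : κ} (hz : x i * h j = 0) :
    componentScaleRight G φ h j * componentScaleLeft G φ x i = h j * x i := by
  rcases mul_eq_zero.mp hz with h0 | h0 <;> simp [componentScaleRight, componentScaleLeft, h0]

lemma componentScale_not_smul {i₀ : ι} {j₀ j₁ : κ} (hφ : ∀ c, φ c ≠ 0)
    (hij₀ : G.connectedComponentMk (.inl i₀) = G.connectedComponentMk (.inr j₀))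
    (hne₀ : x i₀ * h j₀ ≠ 0) (hh₁ : h j₁ ≠ 0)
    (hφne : φ (G.connectedComponentMk (.inl i₀)) ≠ φ (G.connectedComponentMk (.inr j₁)))
    (c : K) : ∃ j i, componentScaleRight G φ h j * componentScaleLeft G φ x i ≠ c * (h j * x i) := by
  by_contra! hsmul
  have hc : c = 1 := by
    have h₀ := hsmul j₀ i₀
    rw [componentScale_mul_of_connectedComponentMk_eq hφ hij₀] at h₀
    exact (mul_eq_right₀ (mul_comm (x i₀) _ ▸ hne₀)).mp h₀.symm
  have hx₀ : x i₀ ≠ 0 := left_ne_zero_of_mul hne₀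
  have := hφ (G.connectedComponentMk (.inr j₁))
  have h₁ := hsmul j₁ i₀
  simp only [componentScaleRight, componentScaleLeft, hc, one_mul] at h₁
  field_simp at h₁
  exact hφne h₁

end ComponentScaling

section ObservationGraph

variable {L : ℕ} {S : Set (Fin L × Fin L)} {x h : Fin L → ℂ}

lemma obsGraph_adj_inl_inr {i j : Fin L} (hS : (j, i) ∈ S) (hnz : x i * h j ≠ 0) :
    (obsGraph S x h).Adj (.inl i) (.inr j) := by
  rw [obsGraph, fromRel_adj]
  exact ⟨by simp, Or.inl ⟨i, j, rfl, rfl, hS, hnz⟩⟩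

lemma obsGraph_exists_mul_ne_zero_of_adj {a b : Fin L ⊕ Fin L} (hab : (obsGraph S x h).Adj a b) :
    ∃ i j, x i * h j ≠ 0 ∧
      (obsGraph S x h).connectedComponentMk (.inl i) = (obsGraph S x h).connectedComponentMk a ∧
      (obsGraph S x h).connectedComponentMk (.inr j) = (obsGraph S x h).connectedComponentMk a := by
  have hcc := ConnectedComponent.connectedComponentMk_eq_of_adj hab
  rw [obsGraph, fromRel_adj] at hab
  rcases hab.2 with ⟨i, j, rfl, rfl, -, hnz⟩ | ⟨i, j, rfl, rfl, -, hnz⟩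
  · exact ⟨i, j, hnz, rfl, hcc.symm⟩
  · exact ⟨i, j, hnz, hcc.symm, rfl⟩

lemma componentScale_obsGraph_mul {φ : (obsGraph S x h).ConnectedComponent → ℂ}
    (hφ : ∀ c, φ c ≠ 0) {p : Fin L × Fin L} (hp : p ∈ S) :
    componentScaleRight _ φ h p.1 * componentScaleLeft _ φ x p.2 = h p.1 * x p.2 := by
  by_cases hz : x p.2 * h p.1 = 0
  · exact componentScale_mul_of_mul_eq_zero hz
  · exact componentScale_mul_of_connectedComponentMk_eq hφ
      (ConnectedComponent.connectedComponentMk_eq_of_adj (obsGraph_adj_inl_inr hp hz))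

end ObservationGraph

/-- If the observation graph has two connected components each of order greater
than one, then the rank-one matrix `h xᵀ` is not determined by the observed
entries up to global scaling: some pair `(h', x')` agrees with `(h, x)` on all
observed entries of the product, yet `h' x'ᵀ` is not any scalar multiple of `h xᵀ`. -/
theorem blind_deconv_not_identifiable {L : ℕ} (S : Set (Fin L × Fin L))
    (x h : Fin L → ℂ)
    (u v : Fin L ⊕ Fin L)
    (hsep : ¬ (obsGraph S x h).Reachable u v)
    (hu : ∃ u' , u' ≠ u ∧ (obsGraph S x h).Reachable u u')
    (hv : ∃ v' , v' ≠ v ∧ (obsGraph S x h).Reachable v v') :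
    ∃ (h' x' : Fin L → ℂ),
      (∀ p ∈ S, h' p.1 * x' p.2 = h p.1 * x p.2) ∧
      ∀ c : ℂ, ∃ i j : Fin L, h' i * x' j ≠ c * (h i * x j) := by
  classical
  obtain ⟨u', hu'u, hru⟩ := hu
  obtain ⟨v', hv'v, hrv⟩ := hv
  obtain ⟨a, hua⟩ := hru.exists_adj_of_ne hu'u
  obtain ⟨b, hvb⟩ := hrv.exists_adj_of_ne hv'v
  obtain ⟨i₀, j₀, hne₀, hi₀, hj₀⟩ := obsGraph_exists_mul_ne_zero_of_adj hua
  obtain ⟨i₁, j₁, hne₁, -, hj₁⟩ := obsGraph_exists_mul_ne_zero_of_adj hvb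
  set G := obsGraph S x h
  let φ : G.ConnectedComponent → ℂ := fun c => if c = G.connectedComponentMk u then 2 else 1
  have hφ : ∀ c, φ c ≠ 0 := fun c => by dsimp only [φ]; split_ifs <;> norm_num
  have hvu : G.connectedComponentMk v ≠ G.connectedComponentMk u :=
    fun hcc => hsep (ConnectedComponent.eq.mp hcc.symm)
  refine ⟨componentScaleRight G φ h, componentScaleLeft G φ x,
    fun p hp => componentScale_obsGraph_mul hφ hp,
    componentScale_not_smul hφ (hi₀.trans hj₀.symm) hne₀ (right_ne_zero_of_mul hne₁) ?_⟩
  rw [hi₀, hj₁]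
  simp only [φ, if_pos, if_neg hvu]
  norm_num
end

section
/- Let ĥ ∈ ℂ^N and x ∈ ℂ^L be unit vectors, let T = {ĥv* + u x̄* : u ∈ ℂ^N, v ∈ ℂ^L} be the tangent space, and let P_T(S) = ĥĥ*S + S x̄x̄* − ĥĥ*S x̄x̄* be the orthogonal projection onto T. Then for any matrix Z ∈ ℂ^{N×L}, the l-th row q_l* of Q = P_T(Z) satisfies ‖q_l‖₂² ≤ ‖ĥ‖∞² ‖Z*ĥ‖₂² + |⟨x̄, z_l⟩|², where z_l is the l-th column of Z*. -/
open Finset Matrix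

/-- The orthogonal projection onto the tangent space
`T = {ĥ v* + u x̄*}`: `P_T(Z) = ĥĥ* Z (I − x̄x̄*) + Z x̄x̄*`. -/
noncomputable def tangentProj {N L : ℕ} (hhat : Fin N → ℂ) (x : Fin L → ℂ)
    (Z : Matrix (Fin N) (Fin L) ℂ) : Matrix (Fin N) (Fin L) ℂ :=
  vecMulVec hhat (star hhat) * Z * (1 - vecMulVec (star x) x) + Z * vecMulVec (star x) x

/-!
Writing `r = ĥ* Z` and `z_l` for the `l`-th row of `Z`, the `l`-th row of `P_T(Z)` is
`ĥ_l (r − ⟨x, r⟩ x) + ⟨x, z_l⟩ x`. For the unit vector `x` the two summands are orthogonal,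
and removing the `x`-component of `r` does not increase its norm, so by Pythagoras the squared
row norm is at most `|ĥ_l|² ‖r‖² + |⟨x, z_l⟩|²`, and `|ĥ_l| ≤ ‖ĥ‖∞`.
-/

open scoped InnerProductSpace

section UnitVector

variable {𝕜 E : Type*} [RCLike 𝕜] [SeminormedAddCommGroup E] [InnerProductSpace 𝕜 E] {e : E}

theorem inner_sub_inner_smul_self_eq_zero (he : ‖e‖ = 1) (v : E) :
    ⟪e, v - ⟪e, v⟫_𝕜 • e⟫_𝕜 = 0 := by
  rw [inner_sub_right, inner_smul_right, inner_self_eq_norm_sq_to_K, he]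
  simp

theorem norm_sub_inner_smul_le (he : ‖e‖ = 1) (v : E) : ‖v - ⟪e, v⟫_𝕜 • e‖ ≤ ‖v‖ := by
  have horth : ⟪v - ⟪e, v⟫_𝕜 • e, ⟪e, v⟫_𝕜 • e⟫_𝕜 = 0 := by
    rw [inner_smul_right, inner_eq_zero_symm.mp (inner_sub_inner_smul_self_eq_zero he v),
      mul_zero]
  have hpyth := norm_add_sq_eq_norm_sq_add_norm_sq_of_inner_eq_zero _ _ horth
  rw [sub_add_cancel] at hpyth
  exact (mul_self_le_mul_self_iff (norm_nonneg _) (norm_nonneg _)).mpr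
    (hpyth ▸ le_add_of_nonneg_right (mul_self_nonneg _))

theorem norm_sq_smul_sub_inner_smul_add_smul_le (he : ‖e‖ = 1) (t c : 𝕜) (v : E) :
    ‖t • (v - ⟪e, v⟫_𝕜 • e) + c • e‖ ^ 2 ≤ ‖t‖ ^ 2 * ‖v‖ ^ 2 + ‖c‖ ^ 2 := by
  have horth : ⟪t • (v - ⟪e, v⟫_𝕜 • e), c • e⟫_𝕜 = 0 := by
    rw [inner_smul_left, inner_smul_right,
      inner_eq_zero_symm.mp (inner_sub_inner_smul_self_eq_zero he v), mul_zero, mul_zero]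
  rw [sq, norm_add_sq_eq_norm_sq_add_norm_sq_of_inner_eq_zero _ _ horth, norm_smul, norm_smul, he,
    mul_one]
  calc ‖t‖ * ‖v - ⟪e, v⟫_𝕜 • e‖ * (‖t‖ * ‖v - ⟪e, v⟫_𝕜 • e‖) + ‖c‖ * ‖c‖
      = ‖t‖ ^ 2 * ‖v - ⟪e, v⟫_𝕜 • e‖ ^ 2 + ‖c‖ ^ 2 := by ring
    _ ≤ ‖t‖ ^ 2 * ‖v‖ ^ 2 + ‖c‖ ^ 2 := by gcongr; exact norm_sub_inner_smul_le he v

end UnitVector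

theorem tangentProj_row {N L : ℕ} (hhat : Fin N → ℂ) (x : Fin L → ℂ)
    (Z : Matrix (Fin N) (Fin L) ℂ) (l : Fin N) :
    tangentProj hhat x Z l = hhat l • (star hhat ᵥ* Z - (star hhat ᵥ* Z ⬝ᵥ star x) • x)
      + (Z l ⬝ᵥ star x) • x := by
  rw [tangentProj, vecMulVec_mul, vecMulVec_mul, vecMul_sub, vecMul_one, vecMul_vecMulVec,
    ← vecMul_vecMulVec (Z l), ← mul_apply_eq_vecMul]
  ext j
  simp only [Matrix.add_apply, vecMulVec_apply, Pi.add_apply, Pi.smul_apply, smul_eq_mul]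

open WithLp in
theorem toLp_tangentProj_row {N L : ℕ} (hhat : Fin N → ℂ) (x : Fin L → ℂ)
    (Z : Matrix (Fin N) (Fin L) ℂ) (l : Fin N) :
    (toLp 2 (tangentProj hhat x Z l) : EuclideanSpace ℂ (Fin L)) =
      hhat l • (toLp 2 (star hhat ᵥ* Z) - ⟪toLp 2 x, toLp 2 (star hhat ᵥ* Z)⟫_ℂ • toLp 2 x)
        + ⟪toLp 2 x, toLp 2 (Z l)⟫_ℂ • toLp 2 x := by
  simp only [tangentProj_row, toLp_add, toLp_smul, toLp_sub, EuclideanSpace.inner_toLp_toLp]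

theorem tangentProj_row_norm_bound_general {N L : ℕ} (hN : 0 < N)
    (hhat : Fin N → ℂ) (x : Fin L → ℂ)
    (hx_unit : ∑ j, ‖x j‖ ^ 2 = 1)
    (Z : Matrix (Fin N) (Fin L) ℂ) (l : Fin N) :
    ∑ j, ‖tangentProj hhat x Z l j‖ ^ 2
      ≤ (univ.sup' (univ_nonempty_iff.mpr ⟨⟨0, hN⟩⟩) fun k => ‖hhat k‖) ^ 2
          * ∑ j, ‖(Zᴴ *ᵥ hhat) j‖ ^ 2
        + ‖∑ j, x j * (starRingEnd ℂ) (Z l j)‖ ^ 2 := by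
  have hx : ‖WithLp.toLp 2 x‖ = 1 := by
    rw [EuclideanSpace.norm_eq, WithLp.ofLp_toLp, hx_unit, Real.sqrt_one]
  have hr : ‖WithLp.toLp 2 (star hhat ᵥ* Z)‖ ^ 2 = ∑ j, ‖(Zᴴ *ᵥ hhat) j‖ ^ 2 := by
    rw [EuclideanSpace.norm_sq_eq, ← star_star hhat, ← star_vecMul]
    simp
  have hc : ‖⟪WithLp.toLp 2 x, WithLp.toLp 2 (Z l)⟫_ℂ‖ = ‖∑ j, x j * (starRingEnd ℂ) (Z l j)‖ := by
    rw [EuclideanSpace.inner_toLp_toLp, ← norm_star (Z l ⬝ᵥ star x), ← dotProduct_star]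
    simp only [dotProduct, Pi.star_apply, RCLike.star_def]
  calc ∑ j, ‖tangentProj hhat x Z l j‖ ^ 2
      = ‖(WithLp.toLp 2 (tangentProj hhat x Z l) : EuclideanSpace ℂ (Fin L))‖ ^ 2 := by
        rw [EuclideanSpace.norm_sq_eq, WithLp.ofLp_toLp]
    _ ≤ ‖hhat l‖ ^ 2 * ‖WithLp.toLp 2 (star hhat ᵥ* Z)‖ ^ 2
          + ‖⟪WithLp.toLp 2 x, WithLp.toLp 2 (Z l)⟫_ℂ‖ ^ 2 := by
        rw [toLp_tangentProj_row]
        exact norm_sq_smul_sub_inner_smul_add_smul_le hx _ _ _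
    _ ≤ _ := by
        rw [hr, hc]
        gcongr
        exact le_sup' (fun k => ‖hhat k‖) (mem_univ l)

/-- Row-norm bound for the projection onto the tangent space: the `l`-th row `q_l*` of
`Q = P_T(Z)` satisfies `‖q_l‖₂² ≤ ‖ĥ‖∞² ‖Z*ĥ‖₂² + |⟨x̄, z_l⟩|²`. -/
theorem tangentProj_row_norm_bound {N L : ℕ} (hN : 0 < N)
    (hhat : Fin N → ℂ) (x : Fin L → ℂ)
    (hh_unit : ∑ k, ‖hhat k‖ ^ 2 = 1)
    (hx_unit : ∑ j, ‖x j‖ ^ 2 = 1)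
    (Z : Matrix (Fin N) (Fin L) ℂ) (l : Fin N) :
    ∑ j, ‖tangentProj hhat x Z l j‖ ^ 2
      ≤ (univ.sup' (univ_nonempty_iff.mpr ⟨⟨0, hN⟩⟩) fun k => ‖hhat k‖) ^ 2
          * ∑ j, ‖(Zᴴ *ᵥ hhat) j‖ ^ 2
        + ‖∑ j, x j * (starRingEnd ℂ) (Z l j)‖ ^ 2 :=
  tangentProj_row_norm_bound_general hN hhat x hx_unit Z l
end

section
/- Suppose the linear map A restricted to a subspace T of ℂ^{N×L} satisfies |‖A(X)‖_F² − ‖X‖_F²| ≤ (1/2)‖X‖_F² for all X ∈ T (near-isometry with E‖A(X)‖_F² = ‖X‖_F²). Then for every Z in the null space of A, ‖P_{T}(Z)‖_F ≤ √2·‖A‖·‖P_{T^⊥}(Z)‖_F ≤ √2·‖A‖·‖P_{T^⊥}(Z)‖_*, where P_T and P_{T⊥} are the orthogonal projections onto T and its orthogonal complement, ‖A‖ is the operator norm of A, and ‖·‖_* is the nuclear norm; in particular if Z ≠ 0 then P_{T^⊥}(Z) ≠ 0. -/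
/-! `X := P_T Z` lies in `T`, so `½‖X‖² ≤ ‖A X‖²`; since `A Z = 0`, `A X = -A (Z - X)`,
whence `‖A X‖ ≤ C ‖Z - X‖` and `‖X‖ ≤ √2 C ‖Z - X‖`. -/

open Finset Matrix

noncomputable def frobNorm {m n : ℕ} (X : Matrix (Fin m) (Fin n) ℂ) : ℝ :=
  Real.sqrt (∑ i, ∑ j, ‖X i j‖ ^ 2)

attribute [local instance] Matrix.frobeniusNormedAddCommGroup

lemma frobNorm_eq_norm {m n : ℕ} (X : Matrix (Fin m) (Fin n) ℂ) : frobNorm X = ‖X‖ := by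
  simp only [frobNorm, Matrix.frobenius_norm_def, Real.sqrt_eq_rpow, Real.rpow_two]

lemma le_sqrt_two_mul_of_half_sq_le_sq {a b : ℝ} (hb : 0 ≤ b) (h : 1 / 2 * a ^ 2 ≤ b ^ 2) :
    a ≤ √2 * b := by
  calc a ≤ |a| := le_abs_self a
    _ = √(a ^ 2) := (Real.sqrt_sq_eq_abs a).symm
    _ ≤ √(2 * b ^ 2) := Real.sqrt_le_sqrt (by linarith)
    _ = √2 * b := by rw [Real.sqrt_mul zero_le_two, Real.sqrt_sq hb]

theorem norm_le_sqrt_two_mul_norm_sub_of_map_eq_zero {E F : Type*}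
    [SeminormedAddCommGroup E] [SeminormedAddCommGroup F] (A : E →+ F) {C : ℝ} (hC0 : 0 ≤ C)
    (hC : ∀ X, ‖A X‖ ≤ C * ‖X‖) {Z X : E} (hZ : A Z = 0) (hX : 1 / 2 * ‖X‖ ^ 2 ≤ ‖A X‖ ^ 2) :
    ‖X‖ ≤ √2 * C * ‖Z - X‖ := by
  have hAX : ‖A X‖ ≤ C * ‖Z - X‖ := by
    calc ‖A X‖ = ‖A (X - Z)‖ := by rw [map_sub, hZ, sub_zero]
      _ ≤ C * ‖X - Z‖ := hC _
      _ = C * ‖Z - X‖ := by rw [norm_sub_rev]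
  rw [mul_assoc]
  refine le_sqrt_two_mul_of_half_sq_le_sq (by positivity) (hX.trans ?_)
  gcongr

theorem nullspace_near_isometry_property_general {N L K : ℕ}
    (T : Submodule ℂ (Matrix (Fin N) (Fin L) ℂ))
    (PT : Matrix (Fin N) (Fin L) ℂ →ₗ[ℂ] Matrix (Fin N) (Fin L) ℂ)
    (hPT_mem : ∀ Z, PT Z ∈ T)
    (A : Matrix (Fin N) (Fin L) ℂ →ₗ[ℂ] Matrix (Fin N) (Fin K) ℂ)
    (C : ℝ) (hC0 : 0 ≤ C)
    (hC : ∀ X, frobNorm (A X) ≤ C * frobNorm X)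
    (hiso : ∀ X ∈ T, |frobNorm (A X) ^ 2 - frobNorm X ^ 2| ≤ (1 / 2) * frobNorm X ^ 2)
    (nuc : Matrix (Fin N) (Fin L) ℂ → ℝ) (hnuc : ∀ M, frobNorm M ≤ nuc M)
    (Z : Matrix (Fin N) (Fin L) ℂ) (hZ : A Z = 0) :
    frobNorm (PT Z) ≤ Real.sqrt 2 * C * frobNorm (Z - PT Z) ∧
    frobNorm (PT Z) ≤ Real.sqrt 2 * C * nuc (Z - PT Z) ∧
    (Z ≠ 0 → Z - PT Z ≠ 0) := by
  simp only [frobNorm_eq_norm] at hC hiso hnuc ⊢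
  have hlow : 1 / 2 * ‖PT Z‖ ^ 2 ≤ ‖A (PT Z)‖ ^ 2 := by
    linarith [(abs_le.1 (hiso _ (hPT_mem Z))).1]
  have hmain := norm_le_sqrt_two_mul_norm_sub_of_map_eq_zero A.toAddMonoidHom hC0 hC hZ hlow
  refine ⟨hmain, hmain.trans (by gcongr; exact hnuc _), fun hZ0 hZX => hZ0 ?_⟩
  rw [hZX, norm_zero, mul_zero, norm_le_zero_iff] at hmain
  rwa [hmain, sub_zero] at hZX

/-- Null-space property from the near-isometry on `T`: if `A` restricted to the
subspace `T` satisfies `|‖A(X)‖_F² − ‖X‖_F²| ≤ ½‖X‖_F²` and `C` bounds the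
operator norm of `A`, then for every `Z ∈ null(A)`,
`‖P_T(Z)‖_F ≤ √2·C·‖P_{T⊥}(Z)‖_F ≤ √2·C·‖P_{T⊥}(Z)‖_*`; in particular
`Z ≠ 0` implies `P_{T⊥}(Z) ≠ 0`. Here `nuc` is any norm dominating the
Frobenius norm (e.g. the nuclear norm). -/
theorem nullspace_near_isometry_property {N L K : ℕ}
    (T : Submodule ℂ (Matrix (Fin N) (Fin L) ℂ))
    (PT : Matrix (Fin N) (Fin L) ℂ →ₗ[ℂ] Matrix (Fin N) (Fin L) ℂ)
    (hPT_mem : ∀ Z, PT Z ∈ T)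
    (hPT_fix : ∀ M ∈ T, PT M = M)
    (hPT_orth : ∀ Z, ∀ M ∈ T,
      ∑ i, ∑ j, (starRingEnd ℂ) ((Z - PT Z) i j) * M i j = 0)
    (A : Matrix (Fin N) (Fin L) ℂ →ₗ[ℂ] Matrix (Fin N) (Fin K) ℂ)
    (C : ℝ) (hC0 : 0 ≤ C)
    (hC : ∀ X, frobNorm (A X) ≤ C * frobNorm X)
    (hiso : ∀ X ∈ T, |frobNorm (A X) ^ 2 - frobNorm X ^ 2| ≤ (1 / 2) * frobNorm X ^ 2)
    (nuc : Matrix (Fin N) (Fin L) ℂ → ℝ) (hnuc : ∀ M, frobNorm M ≤ nuc M)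
    (Z : Matrix (Fin N) (Fin L) ℂ) (hZ : A Z = 0) :
    frobNorm (PT Z) ≤ Real.sqrt 2 * C * frobNorm (Z - PT Z) ∧
    frobNorm (PT Z) ≤ Real.sqrt 2 * C * nuc (Z - PT Z) ∧
    (Z ≠ 0 → Z - PT Z ≠ 0) :=
  nullspace_near_isometry_property_general T PT hPT_mem A C hC0 hC hiso nuc hnuc Z hZ
end
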